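/- arXiv:1712.01102 — 2 statements merged into one kernel-verified Lean document; each statement's English description precedes it below -/
import Mathlib

section
/- Let m ≥ 1 be a natural number and let β, δ > 0 be real numbers with ρ = β/δ. Then ∫₀^∞ δ·e^{−δt} · ( ∑_{k=0}^{∞} m·(1 − (1 − 1/m)^k) · ((βt)^k e^{−βt} / k!) ) dt = m·ρ/(m + ρ). (This is the stationary mean number of different currently valid coupon types obtained under independent Poisson coupon-selection at rate β and Poisson coupon-type replacement at rate δ.) -/
open MeasureTheory Real
open scoped Nat

/-
Given the inter-replacement time `t`, the number of selections is Poisson(`βt`), and the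
probability generating function `E[q^N] = exp((q - 1) a)` of a Poisson(`a`) variable `N` gives
the inner sum in closed form `m (1 - exp(-(β/m) t))`. Averaging `1 - exp(-c t)` against the
exponential(`δ`) density yields `c / (δ + c)`; with `c = β/m` this is `mρ/(m + ρ)`.
-/

lemma hasSum_pow_mul_poisson (q a : ℝ) :
    HasSum (fun k : ℕ => q ^ k * (a ^ k * exp (-a) / k !)) (exp ((q - 1) * a)) := by
  have h := (NormedSpace.expSeries_div_hasSum_exp (q * a)).mul_left (exp (-a))
  rw [← exp_eq_exp_ℝ, ← exp_add] at h
  convert! h using 2 <;> ring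

lemma hasSum_one_sub_pow_mul_poisson (q a : ℝ) :
    HasSum (fun k : ℕ => (1 - q ^ k) * (a ^ k * exp (-a) / k !)) (1 - exp ((q - 1) * a)) := by
  simpa [sub_mul] using (hasSum_pow_mul_poisson 1 a).sub (hasSum_pow_mul_poisson q a)

lemma integral_exp_neg_mul_Ioi_zero {b : ℝ} (hb : 0 < b) :
    ∫ t in Set.Ioi (0 : ℝ), exp (-b * t) = 1 / b := by
  rw [integral_exp_mul_Ioi (neg_neg_of_pos hb)]
  field_simp
  simp

lemma integral_exp_density_mul_one_sub_exp {δ c : ℝ} (hδ : 0 < δ) (hc : 0 ≤ c) :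
    ∫ t in Set.Ioi (0 : ℝ), δ * exp (-δ * t) * (1 - exp (-c * t)) = c / (δ + c) := by
  have hδc : 0 < δ + c := by positivity
  have hsplit : ∀ t : ℝ, δ * exp (-δ * t) * (1 - exp (-c * t))
      = δ * exp (-δ * t) - δ * exp (-(δ + c) * t) := by
    intro t
    rw [mul_sub, mul_one, mul_assoc, ← exp_add]
    ring_nf
  have hint {b : ℝ} (hb : 0 < b) :
      Integrable (fun t => δ * exp (-b * t)) (volume.restrict (Set.Ioi 0)) :=
    ((integrableOn_exp_mul_Ioi (neg_neg_of_pos hb) 0).integrable).const_mul δ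
  simp_rw [hsplit]
  rw [integral_sub (hint hδ) (hint hδc), integral_const_mul, integral_const_mul,
    integral_exp_neg_mul_Ioi_zero hδ, integral_exp_neg_mul_Ioi_zero hδc]
  field_simp
  ring

theorem stmt_4_general (m : ℕ) (β δ : ℝ) (hβ : 0 < β) (hδ : 0 < δ)
    (ρ : ℝ) (hρ : ρ = β / δ) :
    ∫ t in Set.Ioi (0 : ℝ),
        δ * Real.exp (-δ * t) *
          (∑' k : ℕ,
            (m : ℝ) * (1 - (1 - 1 / (m : ℝ)) ^ k) *
              ((β * t) ^ k * Real.exp (-β * t) / (Nat.factorial k)))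
      = (m : ℝ) * ρ / ((m : ℝ) + ρ) := by
  have hsum : ∀ t : ℝ,
      ∑' k : ℕ, (m : ℝ) * (1 - (1 - 1 / (m : ℝ)) ^ k) *
          ((β * t) ^ k * exp (-β * t) / (Nat.factorial k))
        = m * (1 - exp (-(β / m) * t)) := by
    intro t
    simp_rw [mul_assoc (m : ℝ), neg_mul]
    rw [((hasSum_one_sub_pow_mul_poisson _ (β * t)).mul_left (m : ℝ)).tsum_eq]
    ring_nf
  simp_rw [hsum, mul_left_comm _ (m : ℝ)]
  rw [integral_const_mul, integral_exp_density_mul_one_sub_exp hδ (by positivity), hρ]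
  rcases eq_or_ne (m : ℝ) 0 with hm | hm
  · simp [hm]
  · field_simp

/-- Stationary mean number of distinct currently valid coupon types under
Poisson coupon-selection at rate `β` and Poisson full replacement at rate `δ`:
`∫₀^∞ δ e^{−δt} ( ∑ₖ m (1 − (1 − 1/m)^k) (βt)^k e^{−βt}/k! ) dt = mρ/(m+ρ)`,
`ρ = β/δ`. -/
theorem stmt_4 (m : ℕ) (hm : 1 ≤ m) (β δ : ℝ) (hβ : 0 < β) (hδ : 0 < δ)
    (ρ : ℝ) (hρ : ρ = β / δ) :
    ∫ t in Set.Ioi (0 : ℝ),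
        δ * Real.exp (-δ * t) *
          (∑' k : ℕ,
            (m : ℝ) * (1 - (1 - 1 / (m : ℝ)) ^ k) *
              ((β * t) ^ k * Real.exp (-β * t) / (Nat.factorial k)))
      = (m : ℝ) * ρ / ((m : ℝ) + ρ) :=
  stmt_4_general m β δ hβ hδ ρ hρ
end

section
/- Let m ≥ 1 be a natural number, let β, δ > 0 be real numbers with ρ = β/δ, and let ℓ be a natural number with 0 ≤ ℓ ≤ m. Define the Stirling number of the second kind S(k, ℓ) = (1/ℓ!) · ∑_{j=0}^{ℓ} (−1)^{ℓ−j} · C(ℓ, j) · j^k, and the falling factorial (m)_ℓ = m(m−1)⋯(m−ℓ+1). Then ∑_{k=0}^{∞} ((m)_ℓ / m^k) · S(k, ℓ) · (ρ/(ρ+1))^k · (1/(ρ+1)) = (m/ρ) · (m)_ℓ / ∏_{i=0}^{ℓ} ( m(ρ+1)/ρ − i ). (This is the stationary distribution P(Y = ℓ) of the number Y of currently valid coupon types obtained under Poisson coupon-selection at rate β and Poisson replacement of all coupon types at rate δ.) -/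
/-!
By the explicit formula, `ℓ! S(k, ℓ) x^k = ∑_j (-1)^(ℓ-j) C(ℓ, j) (j x)^k`, so summing geometric
series turns `ℓ! ∑_k S(k, ℓ) x^k` into the `ℓ`-th forward difference of `u ↦ (1 - u x)⁻¹` at `0`.
Forward differences of this rational function are explicit,
`Δ^n (1 - u x)⁻¹ = n! x^n / ∏_{i ≤ n} (1 - (u + i) x)`, which gives the classical generating
function `∑_k S(k, ℓ) x^k = x^ℓ / ∏_{i=1}^{ℓ} (1 - i x)` for `ℓ |x| < 1`.
The theorem is this identity at `x = ρ / ((ρ + 1) m)`, which converges because `ℓ ≤ m`.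
-/

open MeasureTheory Real Finset

/-- Stirling number of the second kind, via its explicit formula,
as a real number: `S(k, ℓ) = (1/ℓ!) ∑_{j=0}^{ℓ} (−1)^{ℓ−j} C(ℓ, j) j^k`. -/
noncomputable def stirling2 (k ℓ : ℕ) : ℝ :=
  (1 / (Nat.factorial ℓ : ℝ)) *
    ∑ j ∈ Finset.range (ℓ + 1), (-1 : ℝ) ^ (ℓ - j) * (Nat.choose ℓ j : ℝ) * (j : ℝ) ^ k

/-- Falling factorial `(m)_ℓ = m(m−1)⋯(m−ℓ+1)` as a real number. -/
noncomputable def fallingFact (m ℓ : ℕ) : ℝ :=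
  ∏ i ∈ Finset.range ℓ, ((m : ℝ) - (i : ℝ))

open Nat fwdDiff

theorem fwdDiff_iter_inv_one_sub_mul {K : Type*} [Field K] (x : K) (n : ℕ) (t : K)
    (h : ∀ i ∈ range (n + 1), 1 - (t + i) * x ≠ 0) :
    (Δ_[1])^[n] (fun u ↦ (1 - u * x)⁻¹) t
      = n ! * x ^ n / ∏ i ∈ range (n + 1), (1 - (t + i) * x) := by
  induction n generalizing t with
  | zero => simp
  | succ n ih =>
    have hshift : ∀ i ∈ range (n + 1), 1 - (t + 1 + i) * x ≠ 0 := fun i hi ↦ by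
      simpa [add_assoc, add_comm (1 : K)] using h (i + 1) (by simpa using hi)
    have hbase : ∀ i ∈ range (n + 1), 1 - (t + i) * x ≠ 0 := fun i hi ↦
      h i (by simp at hi ⊢; omega)
    have hfirst : ∏ i ∈ range (n + 2), (1 - (t + i) * x)
        = (∏ i ∈ range (n + 1), (1 - (t + 1 + i) * x)) * (1 - t * x) := by
      rw [prod_range_succ']; push_cast; simp only [add_assoc, add_comm (1 : K), add_zero]
    have hlast : ∏ i ∈ range (n + 2), (1 - (t + i) * x)
        = (∏ i ∈ range (n + 1), (1 - (t + i) * x)) * (1 - (t + (n + 1)) * x) := by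
      rw [prod_range_succ]; push_cast; rfl
    have ht : 1 - t * x ≠ 0 := by simpa using h 0 (by simp)
    have hn : 1 - (t + (n + 1)) * x ≠ 0 := by simpa using h (n + 1) (by simp)
    have hshift_div : (n ! * x ^ n : K) / ∏ i ∈ range (n + 1), (1 - (t + 1 + i) * x)
        = n ! * x ^ n * (1 - t * x) / ∏ i ∈ range (n + 2), (1 - (t + i) * x) := by
      rw [hfirst, mul_div_mul_right _ _ ht]
    have hbase_div : (n ! * x ^ n : K) / ∏ i ∈ range (n + 1), (1 - (t + i) * x)
        = n ! * x ^ n * (1 - (t + (n + 1)) * x) / ∏ i ∈ range (n + 2), (1 - (t + i) * x) := by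
      rw [hlast, mul_div_mul_right _ _ hn]
    -- over the common denominator the two numerators differ by `(n + 1) x`
    rw [Function.iterate_succ_apply', fwdDiff, ih _ hshift, ih _ hbase, hshift_div, hbase_div,
      ← sub_div]
    push_cast [factorial_succ]
    ring

theorem sum_alternating_choose_mul_inv_one_sub_mul {K : Type*} [Field K] (x : K) (n : ℕ)
    (h : ∀ i ∈ range (n + 1), 1 - i * x ≠ 0) :
    ∑ j ∈ range (n + 1), (-1) ^ (n - j) * (n.choose j : K) * (1 - j * x)⁻¹
      = n ! * x ^ n / ∏ i ∈ range n, (1 - (i + 1) * x) := by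
  have := fwdDiff_iter_inv_one_sub_mul x n 0 (by simpa using h)
  rw [fwdDiff_iter_eq_sum_shift, prod_range_succ'] at this
  simpa using this

theorem hasSum_stirling2_mul_pow {ℓ : ℕ} {x : ℝ} (hx : ℓ * |x| < 1) :
    HasSum (fun k ↦ stirling2 k ℓ * x ^ k) (x ^ ℓ / ∏ i ∈ range ℓ, (1 - (i + 1) * x)) := by
  have hjx : ∀ j ∈ range (ℓ + 1), |(j : ℝ) * x| < 1 := fun j hj ↦ by
    have : (j : ℝ) ≤ ℓ := by exact_mod_cast mem_range_succ_iff.1 hj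
    rw [abs_mul, Nat.abs_cast]
    nlinarith [abs_nonneg x]
  have hgeom : HasSum (fun k ↦ (ℓ ! : ℝ)⁻¹ * ∑ j ∈ range (ℓ + 1),
        (-1) ^ (ℓ - j) * (ℓ.choose j : ℝ) * ((j : ℝ) * x) ^ k)
      ((ℓ ! : ℝ)⁻¹ * ∑ j ∈ range (ℓ + 1), (-1) ^ (ℓ - j) * (ℓ.choose j : ℝ) * (1 - j * x)⁻¹) :=
    (hasSum_sum fun j hj ↦ (hasSum_geometric_of_abs_lt_one (hjx j hj)).mul_left _).mul_left _
  have hden : ∀ i ∈ range (ℓ + 1), 1 - (i : ℝ) * x ≠ 0 := fun i hi ↦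
    sub_ne_zero.2 (lt_of_abs_lt (hjx i hi)).ne'
  rw [sum_alternating_choose_mul_inv_one_sub_mul x ℓ hden, ← mul_div_assoc,
    inv_mul_cancel_left₀ (by positivity)] at hgeom
  convert hgeom using 2 with k
  simp only [stirling2, one_div, mul_pow, mul_sum, sum_mul, mul_assoc]

theorem prod_range_succ_inv_sub {K : Type*} [Field K] {x : K} (hx : x ≠ 0) (n : ℕ) :
    ∏ i ∈ range (n + 1), (x⁻¹ - i) = (∏ i ∈ range n, (1 - (i + 1) * x)) / x ^ (n + 1) := by
  have hpow : x ^ (n + 1) = ∏ _i ∈ range (n + 1), x := by simp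
  rw [eq_div_iff (pow_ne_zero _ hx), hpow, ← prod_mul_distrib, prod_range_succ']
  simp [sub_mul, inv_mul_cancel₀ hx]

/-- Stationary distribution of the number of currently valid coupon types under
Poisson selection at rate `β` and Poisson full replacement at rate `δ`:
`∑ₖ ((m)_ℓ/m^k) S(k,ℓ) (ρ/(ρ+1))^k /(ρ+1)
 = (m/ρ) (m)_ℓ / ∏_{i=0}^{ℓ} (m(ρ+1)/ρ − i)`. -/
theorem stmt_6 (m : ℕ) (hm : 1 ≤ m) (β δ : ℝ) (hβ : 0 < β) (hδ : 0 < δ)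
    (ρ : ℝ) (hρ : ρ = β / δ) (ℓ : ℕ) (hℓ : ℓ ≤ m) :
    ∑' k : ℕ,
        (fallingFact m ℓ / (m : ℝ) ^ k) * stirling2 k ℓ *
          (ρ / (ρ + 1)) ^ k * (1 / (ρ + 1))
      = ((m : ℝ) / ρ) * fallingFact m ℓ /
          ∏ i ∈ Finset.range (ℓ + 1), ((m : ℝ) * (ρ + 1) / ρ - (i : ℝ)) := by
  have hρ0 : 0 < ρ := hρ ▸ div_pos hβ hδ
  have hm0 : (0 : ℝ) < m := by exact_mod_cast hm
  set x := ρ / ((ρ + 1) * m) with hx_def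
  have hx0 : 0 < x := by positivity
  have hx : ℓ * |x| < 1 := by
    have : (ℓ : ℝ) ≤ m := by exact_mod_cast hℓ
    rw [abs_of_pos hx0, hx_def, mul_div_assoc', div_lt_one (by positivity)]
    nlinarith
  have hterm : ∀ k : ℕ, (fallingFact m ℓ / (m : ℝ) ^ k) * stirling2 k ℓ *
      (ρ / (ρ + 1)) ^ k * (1 / (ρ + 1)) = fallingFact m ℓ / (ρ + 1) * (stirling2 k ℓ * x ^ k) := by
    intro k
    rw [hx_def, div_mul_eq_div_div, div_pow _ (m : ℝ)]
    field_simp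
  have hinv : (m : ℝ) * (ρ + 1) / ρ = x⁻¹ := by rw [hx_def, inv_div, mul_comm]
  rw [tsum_congr hterm, ((hasSum_stirling2_mul_pow hx).mul_left _).tsum_eq, hinv,
    prod_range_succ_inv_sub hx0.ne']
  have hmx : (m : ℝ) / ρ * x = 1 / (ρ + 1) := by
    rw [hx_def]
    field_simp
  rw [div_div_eq_mul_div]
  linear_combination (-(fallingFact m ℓ * x ^ ℓ / ∏ i ∈ range ℓ, (1 - (i + 1) * x))) * hmx
end
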